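/- arXiv:2102.08796 — 4 statements merged into one kernel-verified Lean document; each statement's English description precedes it below -/
import Mathlib

section
/- The subgroup of GL(4,ℝ) generated by the two matrices σ1 = ρ0ρ1ρ2ρ3 and σ2 = ρ3ρ2ρ1ρ3 has order 48. -/
open Matrix

/-- The general linear group of `4 × 4` real matrices. -/
abbrev GL4 := GL (Fin 4) ℝ

/-- rho0 : the reflection `ρ0 = diag(−1,1,1,1)`. -/
def rho0 : GL4 :=
  ⟨!![-1,0,0,0; 0,1,0,0; 0,0,1,0; 0,0,0,1],
   !![-1,0,0,0; 0,1,0,0; 0,0,1,0; 0,0,0,1],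
   by ext i j; fin_cases i <;> fin_cases j <;>
      simp [Matrix.mul_apply, Fin.sum_univ_four, Matrix.one_apply, Matrix.vecHead, Matrix.vecTail],
   by ext i j; fin_cases i <;> fin_cases j <;>
      simp [Matrix.mul_apply, Fin.sum_univ_four, Matrix.one_apply, Matrix.vecHead, Matrix.vecTail]⟩

/-- rho1 : the permutation matrix transposing coordinates 1 and 2. -/
def rho1 : GL4 :=
  ⟨!![0,1,0,0; 1,0,0,0; 0,0,1,0; 0,0,0,1],
   !![0,1,0,0; 1,0,0,0; 0,0,1,0; 0,0,0,1],
   by ext i j; fin_cases i <;> fin_cases j <;>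
      simp [Matrix.mul_apply, Fin.sum_univ_four, Matrix.one_apply, Matrix.vecHead, Matrix.vecTail],
   by ext i j; fin_cases i <;> fin_cases j <;>
      simp [Matrix.mul_apply, Fin.sum_univ_four, Matrix.one_apply, Matrix.vecHead, Matrix.vecTail]⟩

/-- rho2 : the permutation matrix transposing coordinates 2 and 3. -/
def rho2 : GL4 :=
  ⟨!![1,0,0,0; 0,0,1,0; 0,1,0,0; 0,0,0,1],
   !![1,0,0,0; 0,0,1,0; 0,1,0,0; 0,0,0,1],
   by ext i j; fin_cases i <;> fin_cases j <;>
      simp [Matrix.mul_apply, Fin.sum_univ_four, Matrix.one_apply, Matrix.vecHead, Matrix.vecTail],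
   by ext i j; fin_cases i <;> fin_cases j <;>
      simp [Matrix.mul_apply, Fin.sum_univ_four, Matrix.one_apply, Matrix.vecHead, Matrix.vecTail]⟩

/-- rho3 : the permutation matrix transposing coordinates 3 and 4. -/
def rho3 : GL4 :=
  ⟨!![1,0,0,0; 0,1,0,0; 0,0,0,1; 0,0,1,0],
   !![1,0,0,0; 0,1,0,0; 0,0,0,1; 0,0,1,0],
   by ext i j; fin_cases i <;> fin_cases j <;>
      simp [Matrix.mul_apply, Fin.sum_univ_four, Matrix.one_apply, Matrix.vecHead, Matrix.vecTail],
   by ext i j; fin_cases i <;> fin_cases j <;>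
      simp [Matrix.mul_apply, Fin.sum_univ_four, Matrix.one_apply, Matrix.vecHead, Matrix.vecTail]⟩


/-- `σ1 = ρ0 ρ1 ρ2 ρ3`. -/
def sigma1 : GL4 := rho0 * rho1 * rho2 * rho3

/-- `σ2 = ρ3 ρ2 ρ1 ρ3`. -/
def sigma2 : GL4 := rho3 * rho2 * rho1 * rho3

/-- `σ3 = ρ2 ρ3`. -/
def sigma3 : GL4 := rho2 * rho3

/-!
All four `ρj` are signed permutation matrices, so the group is the injective image of the
subgroup of `GL(4, ℤ)` generated by the same matrices, where it can be computed: the set `B₇` of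
products of at most 7 generators has 48 elements and is stable under left multiplication by the
generators. A finite set containing `1` that is stable under left multiplication by `s` is also
stable under `s⁻¹` (left multiplication by `s` permutes it), so `B₇` is the whole group.
-/

open Pointwise Finset

section WordBall

variable {G : Type*} [Group G] [DecidableEq G]

def wordBall (S : Finset G) : ℕ → Finset G
  | 0 => {1}
  | n + 1 => wordBall S n ∪ S * wordBall S n

lemma one_mem_wordBall (S : Finset G) : ∀ n, (1 : G) ∈ wordBall S n
  | 0 => mem_singleton_self 1
  | n + 1 => mem_union_left _ (one_mem_wordBall S n)

lemma coe_wordBall_subset_closure (S : Finset G) :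
    ∀ n, (wordBall S n : Set G) ⊆ Subgroup.closure (S : Set G)
  | 0 => by simp [wordBall]
  | n + 1 => by
    intro x hx
    simp only [wordBall, coe_union, coe_mul, Set.mem_union] at hx
    rcases hx with hx | ⟨s, hs, y, hy, rfl⟩
    · exact coe_wordBall_subset_closure S n hx
    · exact mul_mem (Subgroup.subset_closure hs) (coe_wordBall_subset_closure S n hy)

lemma inv_smul_finset_subset {a : G} {T : Finset G} (h : a • T ⊆ T) : a⁻¹ • T ⊆ T := by
  have hT : a • T = T := eq_of_subset_of_card_le h (card_smul_finset a T).ge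
  nth_rw 1 [← hT]
  rw [inv_smul_smul]

lemma coe_closure_subset_of_mul_subset {S T : Finset G} (h1 : 1 ∈ T) (hST : S * T ⊆ T) :
    (Subgroup.closure (S : Set G) : Set G) ⊆ T := by
  intro x hx
  induction hx using Subgroup.closure_induction_left with
  | one => exact h1
  | mul_left s hs y _ hy => exact hST (smul_finset_subset_mul hs (smul_mem_smul_finset hy))
  | inv_mul_cancel s hs y _ hy =>
    exact inv_smul_finset_subset ((smul_finset_subset_mul hs).trans hST) (smul_mem_smul_finset hy)

theorem coe_closure_eq_wordBall {S : Finset G} {n : ℕ} (h : S * wordBall S n ⊆ wordBall S n) :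
    (Subgroup.closure (S : Set G) : Set G) = wordBall S n :=
  (coe_closure_subset_of_mul_subset (one_mem_wordBall S n) h).antisymm
    (coe_wordBall_subset_closure S n)

theorem card_closure_eq_card_wordBall {S : Finset G} {n : ℕ}
    (h : S * wordBall S n ⊆ wordBall S n) :
    Nat.card (Subgroup.closure (S : Set G)) = #(wordBall S n) := by
  rw [← SetLike.coe_sort_coe, coe_closure_eq_wordBall h, Nat.card_coe_set_eq, Set.ncard_coe_finset]

end WordBall

theorem Matrix.GeneralLinearGroup.map_injective {n R S : Type*} [Fintype n] [DecidableEq n]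
    [CommRing R] [CommRing S] {f : R →+* S} (hf : Function.Injective f) :
    Function.Injective (map (n := n) f) :=
  Units.map_injective (Matrix.map_injective hf)

def Units.ofMulSelfEqOne {M : Type*} [Monoid M] (a : M) (h : a * a = 1) : Mˣ := ⟨a, a, h, h⟩

def intRho0 : GL (Fin 4) ℤ :=
  .ofMulSelfEqOne !![-1,0,0,0; 0,1,0,0; 0,0,1,0; 0,0,0,1] (by decide)

def intRho1 : GL (Fin 4) ℤ :=
  .ofMulSelfEqOne !![0,1,0,0; 1,0,0,0; 0,0,1,0; 0,0,0,1] (by decide)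

def intRho2 : GL (Fin 4) ℤ :=
  .ofMulSelfEqOne !![1,0,0,0; 0,0,1,0; 0,1,0,0; 0,0,0,1] (by decide)

def intRho3 : GL (Fin 4) ℤ :=
  .ofMulSelfEqOne !![1,0,0,0; 0,1,0,0; 0,0,0,1; 0,0,1,0] (by decide)

def intSigma1 : GL (Fin 4) ℤ := intRho0 * intRho1 * intRho2 * intRho3

def intSigma2 : GL (Fin 4) ℤ := intRho3 * intRho2 * intRho1 * intRho3

lemma map_intCast_intRho :
    GeneralLinearGroup.map (Int.castRingHom ℝ) intRho0 = rho0 ∧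
    GeneralLinearGroup.map (Int.castRingHom ℝ) intRho1 = rho1 ∧
    GeneralLinearGroup.map (Int.castRingHom ℝ) intRho2 = rho2 ∧
    GeneralLinearGroup.map (Int.castRingHom ℝ) intRho3 = rho3 := by
  refine ⟨?_, ?_, ?_, ?_⟩ <;> ext i j <;> fin_cases i <;> fin_cases j <;>
    simp [intRho0, intRho1, intRho2, intRho3, rho0, rho1, rho2, rho3, Units.ofMulSelfEqOne]

lemma mul_wordBall_intSigma_subset :
    ({intSigma1, intSigma2} : Finset _) * wordBall {intSigma1, intSigma2} 7 ⊆
      wordBall {intSigma1, intSigma2} 7 := by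
  decide +kernel

lemma card_wordBall_intSigma : #(wordBall {intSigma1, intSigma2} 7) = 48 := by
  decide +kernel

/-- The subgroup of `GL(4,ℝ)` generated by `σ1` and `σ2` has order 48. -/
theorem closure_sigma1_sigma2_card :
    Nat.card (Subgroup.closure {sigma1, sigma2} : Subgroup GL4) = 48 := by
  have hgens : GeneralLinearGroup.map (Int.castRingHom ℝ) '' ({intSigma1, intSigma2} : Finset _)
      = {sigma1, sigma2} := by
    obtain ⟨h0, h1, h2, h3⟩ := map_intCast_intRho
    simp only [coe_insert, coe_singleton, Set.image_insert_eq, Set.image_singleton, intSigma1,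
      intSigma2, sigma1, sigma2, map_mul, h0, h1, h2, h3]
  rw [← hgens, ← MonoidHom.map_closure,
    Subgroup.card_map_of_injective (GeneralLinearGroup.map_injective Int.cast_injective),
    card_closure_eq_card_wordBall mul_wordBall_intSigma_subset, card_wordBall_intSigma]
end

section
/- There exists an automorphism τ of the subgroup Γ = ⟨σ1, σ2⟩ of GL(4,ℝ) with τ(σ1) = σ1⁻¹ and τ(σ2) = σ1²σ2, and this automorphism is an involution (τ² = id and τ ≠ id). (This shows the map M of type {8,3} is abstractly regular.) -/
/-! Conjugation by `g = tauMatrix` realises `τ`: one checks `σ1 g σ1 = g` and `g σ2 = σ1² σ2 g`, so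
`g σ1 g⁻¹ = σ1⁻¹` and `g σ2 g⁻¹ = σ1² σ2`, hence conjugation by `g` maps `Γ` into itself. Since
`g² = 3·1` is central, this conjugation is an involution, so it restricts to an automorphism of `Γ`;
it is not the identity because `σ1² ≠ 1`. -/

open Matrix

lemma sigma1_mem : sigma1 ∈ Subgroup.closure ({sigma1, sigma2} : Set GL4) :=
  Subgroup.subset_closure (by simp)

lemma sigma2_mem : sigma2 ∈ Subgroup.closure ({sigma1, sigma2} : Set GL4) :=
  Subgroup.subset_closure (by simp)

namespace Subgroup

variable {G : Type*} [Group G]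

theorem mapsTo_closure_of_mapsTo {S : Set G} {φ : G →* G} (hS : Set.MapsTo φ S (closure S)) :
    Set.MapsTo φ (closure S) (closure S) :=
  fun _ hx => (closure_le (closure S |>.comap φ)).mpr hS hx

def restrictInvolution (H : Subgroup G) (φ : G →* G) (hφ : Function.Involutive φ)
    (hH : Set.MapsTo φ H H) : H ≃* H where
  toFun x := ⟨φ (x : G), hH x.2⟩
  invFun x := ⟨φ (x : G), hH x.2⟩
  left_inv x := Subtype.ext (hφ x)
  right_inv x := Subtype.ext (hφ x)
  map_mul' x y := Subtype.ext (map_mul φ (x : G) y)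

end Subgroup

theorem MulAut.conj_involutive_of_mul_self_mem_center {G : Type*} [Group G] {g : G}
    (hg : g * g ∈ Subgroup.center G) : Function.Involutive (MulAut.conj g) := fun x => by
  have hx : g * g * x = x * (g * g) := (Subgroup.mem_center_iff.mp hg x).symm
  calc g * (g * x * g⁻¹) * g⁻¹ = g * g * x * (g * g)⁻¹ := by group
    _ = x := by rw [hx, mul_inv_cancel_right]

def tauMatrix : Matrix (Fin 4) (Fin 4) ℝ := !![-1,0,-1,1; 0,-1,1,1; -1,1,1,0; 1,1,0,1]

theorem tauMatrix_mul_self : tauMatrix * tauMatrix = (3 : ℝ) • 1 := by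
  ext i j; fin_cases i <;> fin_cases j <;>
    simp [tauMatrix, Matrix.mul_apply, Fin.sum_univ_four] <;> norm_num

noncomputable def tauUnit : GL4 where
  val := tauMatrix
  inv := (3 : ℝ)⁻¹ • tauMatrix
  val_inv := by rw [Matrix.mul_smul, tauMatrix_mul_self, smul_smul]; norm_num
  inv_val := by rw [Matrix.smul_mul, tauMatrix_mul_self, smul_smul]; norm_num

theorem tauUnit_mul_self_mem_center : tauUnit * tauUnit ∈ Subgroup.center GL4 :=
  Subgroup.mem_center_iff.mpr fun x => Units.ext <| by
    simp only [Units.val_mul, tauUnit, tauMatrix_mul_self, Matrix.mul_smul, Matrix.smul_mul,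
      mul_one, one_mul]

theorem sigma1_val : (sigma1 : Matrix (Fin 4) (Fin 4) ℝ) =
    !![0,0,0,-1; 1,0,0,0; 0,1,0,0; 0,0,1,0] := by
  ext i j; fin_cases i <;> fin_cases j <;>
    simp [sigma1, rho0, rho1, rho2, rho3, Matrix.mul_apply, Fin.sum_univ_four]

theorem sigma2_val : (sigma2 : Matrix (Fin 4) (Fin 4) ℝ) =
    !![0,1,0,0; 0,0,0,1; 0,0,1,0; 1,0,0,0] := by
  ext i j; fin_cases i <;> fin_cases j <;>
    simp [sigma2, rho1, rho2, rho3, Matrix.mul_apply, Fin.sum_univ_four]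

theorem conj_tauUnit_sigma1 : MulAut.conj tauUnit sigma1 = sigma1⁻¹ := by
  have h : sigma1 * tauUnit * sigma1 = tauUnit := Units.ext <| by
    simp only [Units.val_mul, sigma1_val]
    ext i j; fin_cases i <;> fin_cases j <;>
      simp [tauUnit, tauMatrix, Matrix.mul_apply, Fin.sum_univ_four]
  refine (inv_eq_of_mul_eq_one_right ?_).symm
  rw [MulAut.conj_apply, ← mul_assoc, ← mul_assoc, h, mul_inv_cancel]

theorem conj_tauUnit_sigma2 : MulAut.conj tauUnit sigma2 = sigma1 ^ 2 * sigma2 := by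
  have h : tauUnit * sigma2 = sigma1 ^ 2 * sigma2 * tauUnit := Units.ext <| by
    simp only [Units.val_mul, sigma1_val, sigma2_val, sq]
    ext i j; fin_cases i <;> fin_cases j <;>
      simp [tauUnit, tauMatrix, Matrix.mul_apply, Fin.sum_univ_four]
  rw [MulAut.conj_apply, h, mul_inv_cancel_right]

theorem sigma1_ne_inv : sigma1 ≠ sigma1⁻¹ := fun h => by
  have h00 := congrArg (fun u : GL4 => (u : Matrix (Fin 4) (Fin 4) ℝ) 0 0)
    (mul_eq_one_iff_eq_inv.mpr h)
  simp [sigma1_val, Matrix.mul_apply, Fin.sum_univ_four] at h00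

/-- There is an involutory automorphism `τ` of `Γ = ⟨σ1, σ2⟩` with `τ(σ1) = σ1⁻¹`
and `τ(σ2) = σ1²σ2`; so the map `M` of type `{8,3}` is abstractly regular. -/
theorem map_is_abstractly_regular :
    ∃ τ : (Subgroup.closure {sigma1, sigma2} : Subgroup GL4) ≃*
        (Subgroup.closure {sigma1, sigma2} : Subgroup GL4),
      τ ⟨sigma1, sigma1_mem⟩ = ⟨sigma1⁻¹, inv_mem sigma1_mem⟩ ∧
      τ ⟨sigma2, sigma2_mem⟩ = ⟨sigma1 ^ 2 * sigma2, mul_mem (pow_mem sigma1_mem 2) sigma2_mem⟩ ∧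
      (∀ x, τ (τ x) = x) ∧ τ ≠ MulEquiv.refl _ := by
  have hφ := MulAut.conj_involutive_of_mul_self_mem_center tauUnit_mul_self_mem_center
  have hΓ : Set.MapsTo (MulAut.conj tauUnit) {sigma1, sigma2}
      (Subgroup.closure {sigma1, sigma2}) := by
    rintro s (rfl | rfl)
    · exact conj_tauUnit_sigma1 ▸ inv_mem sigma1_mem
    · exact conj_tauUnit_sigma2 ▸ mul_mem (pow_mem sigma1_mem 2) sigma2_mem
  refine ⟨(Subgroup.closure _).restrictInvolution (MulAut.conj tauUnit).toMonoidHom hφ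
    (Subgroup.mapsTo_closure_of_mapsTo hΓ), Subtype.ext conj_tauUnit_sigma1,
    Subtype.ext conj_tauUnit_sigma2, fun x => Subtype.ext (hφ x), fun h => sigma1_ne_inv ?_⟩
  have hσ1 : MulAut.conj tauUnit sigma1 = sigma1 :=
    congrArg (fun τ => (τ ⟨sigma1, sigma1_mem⟩ : GL4)) h
  exact hσ1.symm.trans conj_tauUnit_sigma1
end

section
/- Let a = σ1⁻¹σ2σ1⁻¹ and b = σ2σ1⁴ in GL(4,ℝ). Then a³ = b³ = (ab)² = −I, and the subgroup ⟨a, b⟩ generated by a and b is a normal subgroup of Γ = ⟨σ1, σ2⟩ of order 24 (a copy of the binary tetrahedral group ⟨3,3,2⟩). -/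
open Matrix

/-- `a = σ1⁻¹ σ2 σ1⁻¹`. -/
def aEl : GL4 := sigma1⁻¹ * sigma2 * sigma1⁻¹

/-- `b = σ2 σ1⁴`. -/
def bEl : GL4 := sigma2 * sigma1 ^ 4

/-!
Every matrix in sight is a signed permutation matrix, so all computations can be done in
`GL (Fin 4) ℤ`, which embeds into `GL (Fin 4) ℝ`. There `σ1⁴ = -1`, `σ2³ = 1`, and conjugation by
`σ1` and `σ2` sends `a` and `b` to words in `a`, `b`. As the generators of `Γ` have finite order,
`Γ` is already generated as a monoid by `σ1`, `σ2`, so these four conjugation identities make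
`⟨a, b⟩` normal in `Γ`.

For the order: `ab` and `ba` generate a quaternion group `Q₈ = {(ab)ʲ(ba)ᵉ}`, and `⟨a, b⟩ = ⟨a⟩Q₈`
with `⟨a⟩ ∩ Q₈ = {±1}`. Concretely, the 24 words `aᵏ(ab)ʲ(ba)ᵉ` (`k < 3`, `j < 4`, `e < 2`) are
pairwise distinct and their set is closed under right multiplication by `a` and `b`, hence (again
since `a` and `b` have finite order) it is the whole subgroup `⟨a, b⟩`.
-/

namespace Subgroup

variable {G : Type*} [Group G]

theorem coe_closure_eq_of_mul_mem {s S : Set G} (hs : ∀ g ∈ s, IsOfFinOrder g)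
    (hS : S ⊆ closure s) (one_mem : 1 ∈ S) (mul_mem : ∀ x ∈ S, ∀ g ∈ s, x * g ∈ S) :
    (closure s : Set G) = S := by
  refine subset_antisymm (fun x hx ↦ ?_) hS
  rw [SetLike.mem_coe, ← mem_toSubmonoid, closure_toSubmonoid_of_isOfFinOrder hs] at hx
  induction hx using Submonoid.closure_induction_right with
  | one => exact one_mem
  | mul_right x _ g hg hx => exact mul_mem x hx g hg

theorem closure_le_normalizer_closure {s t : Set G} (ht : ∀ g ∈ t, IsOfFinOrder g)
    (conj_mem : ∀ g ∈ t, ∀ x ∈ s, g * x * g⁻¹ ∈ closure s) :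
    closure t ≤ normalizer (closure s : Set G) := by
  rw [le_normalizer_iff]
  intro g hg
  rw [← mem_toSubmonoid, closure_toSubmonoid_of_isOfFinOrder ht] at hg
  induction hg using Submonoid.closure_induction with
  | mem g hg =>
    intro x hx
    induction hx using closure_induction with
    | mem x hx => exact conj_mem g hg x hx
    | one => simp
    | mul x y _ _ hx hy => simpa [mul_assoc] using Subgroup.mul_mem _ hx hy
    | inv x _ hx => simpa [mul_assoc] using inv_mem hx
  | one => simp
  | mul g h _ _ hg hh =>
    intro x hx
    simpa [mul_assoc] using hg _ (hh x hx)

end Subgroup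

theorem isOfFinOrder_of_pow_eq_neg_one {M : Type*} [Monoid M] [HasDistribNeg M] {x : M} {n : ℕ}
    (hn : 0 < n) (hx : x ^ n = -1) : IsOfFinOrder x :=
  isOfFinOrder_iff_pow_eq_one.2 ⟨n * 2, by omega, by rw [pow_mul, hx, neg_one_sq]⟩

def toGLReal : GL (Fin 4) ℤ →* GL4 := GeneralLinearGroup.map (Int.castRingHom ℝ)

theorem toGLReal_injective : Function.Injective toGLReal :=
  Units.map_injective (Matrix.map_injective Int.cast_injective)

theorem toGLReal_neg_one : toGLReal (-1) = -1 :=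
  Units.map_neg_one (Int.castRingHom ℝ).mapMatrix

def sigma1Z : GL (Fin 4) ℤ :=
  ⟨!![0, 0, 0, -1; 1, 0, 0, 0; 0, 1, 0, 0; 0, 0, 1, 0],
   !![0, 1, 0, 0; 0, 0, 1, 0; 0, 0, 0, 1; -1, 0, 0, 0], by decide, by decide⟩

def sigma2Z : GL (Fin 4) ℤ :=
  ⟨!![0, 1, 0, 0; 0, 0, 0, 1; 0, 0, 1, 0; 1, 0, 0, 0],
   !![0, 0, 0, 1; 1, 0, 0, 0; 0, 0, 1, 0; 0, 1, 0, 0], by decide, by decide⟩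

def aZ : GL (Fin 4) ℤ := sigma1Z⁻¹ * sigma2Z * sigma1Z⁻¹

def bZ : GL (Fin 4) ℤ := sigma2Z * sigma1Z ^ 4

theorem toGLReal_sigma1Z : toGLReal sigma1Z = sigma1 := by
  ext i j
  fin_cases i <;> fin_cases j <;>
    simp [toGLReal, sigma1Z, sigma1, rho0, rho1, rho2, rho3, mul_apply, Fin.sum_univ_four]

theorem toGLReal_sigma2Z : toGLReal sigma2Z = sigma2 := by
  ext i j
  fin_cases i <;> fin_cases j <;>
    simp [toGLReal, sigma2Z, sigma2, rho1, rho2, rho3, mul_apply, Fin.sum_univ_four]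

theorem toGLReal_aZ : toGLReal aZ = aEl := by
  simp [aZ, aEl, toGLReal_sigma1Z, toGLReal_sigma2Z]

theorem toGLReal_bZ : toGLReal bZ = bEl := by
  simp [bZ, bEl, toGLReal_sigma1Z, toGLReal_sigma2Z]

theorem aZ_pow_three : aZ ^ 3 = -1 := by decide

theorem bZ_pow_three : bZ ^ 3 = -1 := by decide

theorem aZ_mul_bZ_sq : (aZ * bZ) ^ 2 = -1 := by decide

theorem sigma1Z_pow_four : sigma1Z ^ 4 = -1 := by decide

theorem sigma2Z_pow_three : sigma2Z ^ 3 = 1 := by decide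

theorem sigma1Z_conj_aZ : sigma1Z * aZ * sigma1Z⁻¹ = aZ * bZ⁻¹ := by decide

theorem sigma1Z_conj_bZ : sigma1Z * bZ * sigma1Z⁻¹ = aZ⁻¹ * bZ := by decide

theorem sigma2Z_conj_aZ : sigma2Z * aZ * sigma2Z⁻¹ = aZ⁻¹ * bZ := by decide

theorem sigma2Z_conj_bZ : sigma2Z * bZ * sigma2Z⁻¹ = bZ := by decide

def normalFormZ (x : Fin 3 × Fin 4 × Fin 2) : GL (Fin 4) ℤ :=
  aZ ^ (x.1 : ℕ) * (aZ * bZ) ^ (x.2.1 : ℕ) * (bZ * aZ) ^ (x.2.2 : ℕ)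

theorem normalFormZ_injective : Function.Injective normalFormZ := by decide

theorem exists_normalFormZ_eq_mul_aZ : ∀ x, ∃ y, normalFormZ y = normalFormZ x * aZ := by decide

theorem exists_normalFormZ_eq_mul_bZ : ∀ x, ∃ y, normalFormZ y = normalFormZ x * bZ := by decide

theorem coe_closure_aZ_bZ :
    (Subgroup.closure {aZ, bZ} : Set (GL (Fin 4) ℤ)) = Set.range normalFormZ := by
  have ha : aZ ∈ Subgroup.closure {aZ, bZ} := Subgroup.subset_closure (by simp)
  have hb : bZ ∈ Subgroup.closure {aZ, bZ} := Subgroup.subset_closure (by simp)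
  refine Subgroup.coe_closure_eq_of_mul_mem ?_ ?_ ⟨0, by simp [normalFormZ]⟩ ?_
  · rintro g (rfl | rfl)
    · exact isOfFinOrder_of_pow_eq_neg_one (by norm_num) aZ_pow_three
    · exact isOfFinOrder_of_pow_eq_neg_one (by norm_num) bZ_pow_three
  · rintro _ ⟨x, rfl⟩
    exact mul_mem (mul_mem (pow_mem ha _) (pow_mem (mul_mem ha hb) _)) (pow_mem (mul_mem hb ha) _)
  · rintro _ ⟨x, rfl⟩ g (rfl | rfl)
    · exact exists_normalFormZ_eq_mul_aZ x
    · exact exists_normalFormZ_eq_mul_bZ x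

theorem card_closure_aZ_bZ : Nat.card (Subgroup.closure {aZ, bZ}) = 24 := by
  rw [← SetLike.coe_sort_coe, coe_closure_aZ_bZ, Nat.card_range_of_injective normalFormZ_injective]
  simp

theorem closure_sigmaZ_le_normalizer : Subgroup.closure {sigma1Z, sigma2Z} ≤
    Subgroup.normalizer (Subgroup.closure {aZ, bZ} : Set (GL (Fin 4) ℤ)) := by
  have ha : aZ ∈ Subgroup.closure {aZ, bZ} := Subgroup.subset_closure (by simp)
  have hb : bZ ∈ Subgroup.closure {aZ, bZ} := Subgroup.subset_closure (by simp)
  refine Subgroup.closure_le_normalizer_closure ?_ ?_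
  · rintro g (rfl | rfl)
    · exact isOfFinOrder_of_pow_eq_neg_one (by norm_num) sigma1Z_pow_four
    · exact isOfFinOrder_iff_pow_eq_one.2 ⟨3, by norm_num, sigma2Z_pow_three⟩
  · rintro g (rfl | rfl) x (rfl | rfl)
    · rw [sigma1Z_conj_aZ]; exact mul_mem ha (inv_mem hb)
    · rw [sigma1Z_conj_bZ]; exact mul_mem (inv_mem ha) hb
    · rw [sigma2Z_conj_aZ]; exact mul_mem (inv_mem ha) hb
    · rw [sigma2Z_conj_bZ]; exact hb

/-- `a³ = b³ = (ab)² = −I`, and `⟨a, b⟩` is a normal subgroup of `Γ = ⟨σ1, σ2⟩` of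
order 24 (a copy of the binary tetrahedral group). -/
theorem binary_tetrahedral_normal_subgroup :
    aEl ^ 3 = (-1 : GL4) ∧ bEl ^ 3 = (-1 : GL4) ∧ (aEl * bEl) ^ 2 = (-1 : GL4) ∧
    Subgroup.closure {aEl, bEl} ≤ Subgroup.closure ({sigma1, sigma2} : Set GL4) ∧
    ((Subgroup.closure {aEl, bEl}).subgroupOf
        (Subgroup.closure ({sigma1, sigma2} : Set GL4))).Normal ∧
    Nat.card (Subgroup.closure {aEl, bEl} : Subgroup GL4) = 24 := by
  have hH : Subgroup.closure {aEl, bEl} = (Subgroup.closure {aZ, bZ}).map toGLReal := by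
    rw [MonoidHom.map_closure, Set.image_pair, toGLReal_aZ, toGLReal_bZ]
  have hΓ : Subgroup.closure {sigma1, sigma2} =
      (Subgroup.closure {sigma1Z, sigma2Z}).map toGLReal := by
    rw [MonoidHom.map_closure, Set.image_pair, toGLReal_sigma1Z, toGLReal_sigma2Z]
  have hσ1 : sigma1 ∈ Subgroup.closure ({sigma1, sigma2} : Set GL4) :=
    Subgroup.subset_closure (by simp)
  have hσ2 : sigma2 ∈ Subgroup.closure ({sigma1, sigma2} : Set GL4) :=
    Subgroup.subset_closure (by simp)
  have hle : Subgroup.closure {aEl, bEl} ≤ Subgroup.closure ({sigma1, sigma2} : Set GL4) :=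
    (Subgroup.closure_le _).2 <| Set.pair_subset
      (mul_mem (mul_mem (inv_mem hσ1) hσ2) (inv_mem hσ1)) (mul_mem hσ2 (pow_mem hσ1 4))
  refine ⟨?_, ?_, ?_, hle, ?_, ?_⟩
  · rw [← toGLReal_aZ, ← map_pow, aZ_pow_three, toGLReal_neg_one]
  · rw [← toGLReal_bZ, ← map_pow, bZ_pow_three, toGLReal_neg_one]
  · rw [← toGLReal_aZ, ← toGLReal_bZ, ← map_mul, ← map_pow, aZ_mul_bZ_sq, toGLReal_neg_one]
  · rw [Subgroup.normal_subgroupOf_iff_le_normalizer hle, hΓ, hH]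
    exact (Subgroup.map_mono closure_sigmaZ_le_normalizer).trans (Subgroup.le_normalizer_map _)
  · rw [hH, Subgroup.card_map_of_injective toGLReal_injective, card_closure_aZ_bZ]
end

section
/- The Möbius–Kantor configuration 8₃ cannot be realized in the real plane: there is no injective function f : ZMod 8 → ℝ² such that for every i ∈ ZMod 8 the three points f(i), f(i+1), f(i+3) are collinear, while for every i and every j ∉ {i, i+1, i+3} the four points f(i), f(i+1), f(i+3), f(j) are not collinear. -/
/-!
Collinearity of `p, q, r` in `k²` is the vanishing of `det (q - p, r - p)`, and an affine change
of coordinates only rescales this determinant. Since `f 0, f 1, f 2` are not collinear we may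
normalize them to `(0, 0), (1, 0), (0, 1)`. The eight incidences then leave one free slope `l`
(the line through `f 0`, `f 5`, `f 6`), which must satisfy a quadratic equation whose discriminant
is `-3` times a nonzero square. Hence a realization over a field `k` forces `-3` to be a square
in `k`, which fails in `ℝ`.
-/

variable {k : Type*} [Field k]

def det2 (u v : Fin 2 → k) : k := u 0 * v 1 - u 1 * v 0

@[simp]
theorem det2_self (u : Fin 2 → k) : det2 u u = 0 := by
  unfold det2; ring

theorem det2_sub_eq_zero_of_collinear {p q r : Fin 2 → k}
    (h : Collinear k ({p, q, r} : Set (Fin 2 → k))) : det2 (q - p) (r - p) = 0 := by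
  obtain ⟨v, hv⟩ := (collinear_iff_of_mem (Set.mem_insert p _)).1 h
  obtain ⟨b, rfl⟩ := hv q (by simp)
  obtain ⟨c, rfl⟩ := hv r (by simp)
  simp only [vadd_eq_add, add_sub_cancel_right, det2, Pi.smul_apply, smul_eq_mul]
  ring

theorem exists_smul_eq_of_det2_eq_zero {u v : Fin 2 → k} (hu : u ≠ 0) (h : det2 u v = 0) :
    ∃ t : k, t • u = v := by
  unfold det2 at h
  by_cases h0 : u 0 = 0
  · have h1 : u 1 ≠ 0 := fun h1 => hu (funext fun i => by fin_cases i <;> assumption)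
    refine ⟨v 1 / u 1, funext fun i => ?_⟩
    fin_cases i <;> simp only [Fin.zero_eta, Fin.mk_one, Pi.smul_apply, smul_eq_mul] <;> field_simp
    linear_combination h
  · refine ⟨v 0 / u 0, funext fun i => ?_⟩
    fin_cases i <;> simp only [Fin.zero_eta, Fin.mk_one, Pi.smul_apply, smul_eq_mul] <;> field_simp
    linear_combination -h

theorem collinear_of_det2_sub_eq_zero {p q r s : Fin 2 → k} (hpq : p ≠ q)
    (hr : det2 (q - p) (r - p) = 0) (hs : det2 (q - p) (s - p) = 0) :
    Collinear k ({p, q, r, s} : Set (Fin 2 → k)) := by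
  have mem_line : ∀ z, det2 (q - p) (z - p) = 0 → z ∈ line[k, p, q] := fun z hz => by
    obtain ⟨t, ht⟩ := exists_smul_eq_of_det2_eq_zero (sub_ne_zero.2 hpq.symm) hz
    rw [← vsub_vadd z p]
    exact vadd_left_mem_affineSpan_pair.2 ⟨t, ht⟩
  have hperm : ({p, q, r, s} : Set (Fin 2 → k)) = {r, s, p, q} := by
    ext; simp only [Set.mem_insert_iff, Set.mem_singleton_iff]; tauto
  rw [hperm]
  exact collinear_insert_insert_of_mem_affineSpan_pair (mem_line r hr) (mem_line s hs)

def cramerCoords (u v w : Fin 2 → k) : Fin 2 → k :=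
  ![det2 w v / det2 u v, det2 u w / det2 u v]

section cramerCoords

variable {u v : Fin 2 → k}

theorem cramerCoords_sub (w z : Fin 2 → k) :
    cramerCoords u v (w - z) = cramerCoords u v w - cramerCoords u v z := by
  ext i
  fin_cases i <;> simp [cramerCoords, det2] <;> ring

theorem cramerCoords_zero : cramerCoords u v 0 = 0 := by
  simpa using cramerCoords_sub (u := u) (v := v) 0 0

theorem cramerCoords_left (h : det2 u v ≠ 0) : cramerCoords u v u = ![1, 0] := by
  ext i
  fin_cases i <;> simp [cramerCoords, h]

theorem cramerCoords_right (h : det2 u v ≠ 0) : cramerCoords u v v = ![0, 1] := by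
  ext i
  fin_cases i <;> simp [cramerCoords, h]

theorem det2_cramerCoords (h : det2 u v ≠ 0) (w z : Fin 2 → k) :
    det2 (cramerCoords u v w) (cramerCoords u v z) = det2 w z / det2 u v := by
  have key : det2 w v * det2 u z - det2 u w * det2 z v = det2 u v * det2 w z := by
    unfold det2; ring
  change det2 w v / det2 u v * (det2 u z / det2 u v)
    - det2 u w / det2 u v * (det2 z v / det2 u v) = _
  field_simp
  linear_combination key

end cramerCoords

theorem isSquare_of_sq_eq_mul_sq {d K z : k} (hK : K ≠ 0) (h : z ^ 2 = d * K ^ 2) :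
    IsSquare d :=
  ⟨z / K, by field_simp; linear_combination -h⟩

namespace MobiusKantor

/- In the frame `f 0 = (0, 0)`, `f 1 = (1, 0)`, `f 2 = (0, 1)` the remaining points are
`f 3 = (a, 0)`, `f 4 = (u, 1 - u)`, `f 5 = (c, s)`, `f 6 = l • f 5`, `f 7 = (0, w)`, and
`e3`, `e4`, `e6` are the incidences of the lines `{3, 4, 6}`, `{4, 5, 7}`, `{6, 7, 1}`. -/
theorem isSquare_neg_three_of_coords {a c s l u w : k} (hc : c = a * (1 - s))
    (ha : a ≠ 0) (hs : s ≠ 0) (hK : 1 - s - c ≠ 0)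
    (e3 : (u - a) * (l * s) = (1 - u) * (l * c - a))
    (e4 : (c - u) * (w - 1 + u) + u * (s - 1 + u) = 0)
    (e6 : w * (1 - l * c) = l * s) : IsSquare (-3 : k) := by
  -- eliminate `u` between `e3` and `e4`, after clearing `w` from `e4` with `e6`
  have hquad : a * s * ((-(1 - s + s ^ 2) + c * (1 - 2 * s) - c ^ 2) * (l * l)
      + (1 + s + c) * l + -1) = 0 := by
    subst hc
    linear_combination (l * (s + a * (1 - s)) - a) * (1 - l * (a * (1 - s))) * e4
      - (l * (s + a * (1 - s)) - a) * (a * (1 - s) - u) * e6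
      - (a * (1 - s) + s - l * ((a * (1 - s)) ^ 2 + a * (1 - s) * s + s)) * e3
  have hdisc := discrim_eq_sq_of_quadratic_eq_zero
    ((mul_eq_zero.1 hquad).resolve_left (mul_ne_zero ha hs))
  exact isSquare_of_sq_eq_mul_sq hK (hdisc.symm.trans (by unfold discrim; ring))

theorem isSquare_neg_three_of_normalized (g : ZMod 8 → Fin 2 → k)
    (h0 : g 0 = 0) (h1 : g 1 = ![1, 0]) (h2 : g 2 = ![0, 1])
    (hline : ∀ i, det2 (g (i + 1) - g i) (g (i + 3) - g i) = 0)
    (hgen : ∀ i j, j ∉ ({i, i + 1, i + 3} : Set (ZMod 8)) →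
      det2 (g (i + 1) - g i) (g j - g i) ≠ 0) :
    IsSquare (-3 : k) := by
  have n20 := hgen 2 0 (by decide)
  have n05 := hgen 0 5 (by decide)
  have n15 := hgen 1 5 (by decide)
  have l0 := hline 0
  have l1 := hline 1
  have l2 := hline 2
  have l3 := hline 3
  have l4 := hline 4
  have l5 := hline 5
  have l6 := hline 6
  have l7 := hline 7
  reduce_mod_char at n20 n05 n15 l0 l1 l2 l3 l4 l5 l6 l7
  simp only [det2, h0, h1, h2, Pi.add_apply, Pi.neg_apply, Pi.zero_apply, Matrix.cons_val_zero,
    Matrix.cons_val_one, Matrix.cons_val_fin_one, neg_zero, add_zero, ← sub_eq_add_neg]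
    at n20 n05 n15 l0 l1 l2 l3 l4 l5 l6 l7
  have hy3 : g 3 1 = 0 := by linear_combination l0
  have hy4 : g 4 1 = 1 - g 4 0 := by linear_combination -l1
  have hx7 : g 7 0 = 0 := by linear_combination -l7
  have hx3 : g 3 0 ≠ 0 := fun h => n20 (by rw [h]; ring)
  have hy5 : g 5 1 ≠ 0 := fun h => n05 (by rw [h]; ring)
  have hK : 1 - g 5 1 - g 5 0 ≠ 0 := fun h => n15 (by linear_combination h)
  have hx5 : g 5 0 = g 3 0 * (1 - g 5 1) := by rw [hy3] at l2; linear_combination l2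
  obtain ⟨l, hy6⟩ : ∃ l, g 6 1 = l * g 5 1 := ⟨_, (div_mul_cancel₀ _ hy5).symm⟩
  have hx6 : g 6 0 = l * g 5 0 :=
    mul_right_cancel₀ hy5 (by rw [hy6] at l5; linear_combination -l5)
  rw [hy3, hy4, hx6, hy6] at l3
  rw [hy4, hx7] at l4
  rw [hx7, hx6, hy6] at l6
  exact isSquare_neg_three_of_coords (l := l) (u := g 4 0) (w := g 7 1) hx5 hx3 hy5 hK
    (by linear_combination l3) (by linear_combination l4) (by linear_combination -l6)

theorem isSquare_neg_three_of_det2 (f : ZMod 8 → Fin 2 → k)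
    (hline : ∀ i, det2 (f (i + 1) - f i) (f (i + 3) - f i) = 0)
    (hgen : ∀ i j, j ∉ ({i, i + 1, i + 3} : Set (ZMod 8)) →
      det2 (f (i + 1) - f i) (f j - f i) ≠ 0) :
    IsSquare (-3 : k) := by
  have hD : det2 (f 1 - f 0) (f 2 - f 0) ≠ 0 := by simpa using hgen 0 2 (by decide)
  set g := fun i => cramerCoords (f 1 - f 0) (f 2 - f 0) (f i - f 0)
  have hg : ∀ i j l, det2 (g j - g i) (g l - g i) =
      det2 (f j - f i) (f l - f i) / det2 (f 1 - f 0) (f 2 - f 0) := fun i j l => by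
    simp only [g, ← cramerCoords_sub, sub_sub_sub_cancel_right, det2_cramerCoords hD]
  exact isSquare_neg_three_of_normalized g (by simp [g, cramerCoords_zero])
    (cramerCoords_left hD) (cramerCoords_right hD) (fun i => by rw [hg, hline, zero_div])
    (fun i j hj => by rw [hg]; exact div_ne_zero (hgen i j hj) hD)

theorem isSquare_neg_three_of_realization (f : ZMod 8 → Fin 2 → k) (hinj : Function.Injective f)
    (hcol : ∀ i : ZMod 8, Collinear k ({f i, f (i + 1), f (i + 3)} : Set (Fin 2 → k)))
    (hncol : ∀ i j : ZMod 8, j ∉ ({i, i + 1, i + 3} : Set (ZMod 8)) →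
      ¬ Collinear k ({f i, f (i + 1), f (i + 3), f j} : Set (Fin 2 → k))) :
    IsSquare (-3 : k) := by
  have hline i := det2_sub_eq_zero_of_collinear (hcol i)
  refine isSquare_neg_three_of_det2 f hline fun i j hj h => hncol i j hj ?_
  have hi : i ≠ i + 1 := by simp [show (1 : ZMod 8) ≠ 0 by decide]
  exact collinear_of_det2_sub_eq_zero (hinj.ne hi) (hline i) h

end MobiusKantor

/-- The Möbius–Kantor configuration `8₃` cannot be realized by points and lines of the
real affine plane. -/
theorem mobiusKantor_not_realizable_over_R :
    ¬∃ f : ZMod 8 → (Fin 2 → ℝ), Function.Injective f ∧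
      (∀ i : ZMod 8, Collinear ℝ ({f i, f (i + 1), f (i + 3)} : Set (Fin 2 → ℝ))) ∧
      (∀ i j : ZMod 8, j ∉ ({i, i + 1, i + 3} : Set (ZMod 8)) →
        ¬ Collinear ℝ ({f i, f (i + 1), f (i + 3), f j} : Set (Fin 2 → ℝ))) := by
  rintro ⟨f, hinj, hcol, hncol⟩
  obtain ⟨r, hr⟩ := MobiusKantor.isSquare_neg_three_of_realization f hinj hcol hncol
  nlinarith [mul_self_nonneg r]
end
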